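/- If e is a coloop of a semimatroid 𝒞, then T_𝒞(x,y) = x · T_{𝒞/e}(x,y). -/

import Mathlib

/-- A semimatroid on ground type `α`: a nonempty downward-closed collection `Δ` of finite
subsets (a simplicial complex) together with a rank function `r` satisfying the five
semimatroid axioms of Ardila. -/
structure IsSemimatroid {α : Type*} [DecidableEq α] (Δ : Finset α → Prop) (r : Finset α → ℕ) :
    Prop where
  nonempty : ∃ σ, Δ σ
  down_closed : ∀ ⦃σ τ : Finset α⦄, Δ σ → τ ⊆ σ → Δ τ
  rank_le_card : ∀ ⦃σ⦄, Δ σ → r σ ≤ σ.card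
  rank_mono : ∀ ⦃σ τ⦄, Δ σ → Δ τ → σ ⊆ τ → r σ ≤ r τ
  submodular : ∀ ⦃σ τ⦄, Δ σ → Δ τ → Δ (σ ∪ τ) → r (σ ∪ τ) + r (σ ∩ τ) ≤ r σ + r τ
  union_mem : ∀ ⦃σ τ⦄, Δ σ → Δ τ → r σ = r (σ ∩ τ) → Δ (σ ∪ τ)
  exchange : ∀ ⦃σ τ⦄, Δ σ → Δ τ → r σ < r τ → ∃ y ∈ τ \ σ, Δ (insert y σ)

/-- The faces of the complex (a finite downward-closed family) of the deletion at `e`. -/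
def delC {α : Type*} [DecidableEq α] (Δ : Finset (Finset α)) (e : α) : Finset (Finset α) :=
  Δ.filter (fun τ => e ∉ τ)

/-- The faces of the link (contraction complex) at `e`. -/
def lkC {α : Type*} [DecidableEq α] (Δ : Finset (Finset α)) (e : α) : Finset (Finset α) :=
  (Δ.filter (fun τ => e ∈ τ)).image (fun τ => τ.erase e)

/-- The rank of a semimatroid: the maximum rank of a face (the common size of the bases). -/
def rkOf {α : Type*} (Δ : Finset (Finset α)) (r : Finset α → ℕ) : ℕ := Δ.sup r

/-- The Tutte polynomial of a semimatroid, evaluated at real numbers `x, y`: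
`T(x,y) = Σ_{σ ∈ Δ} (x−1)^{r_𝒞 − r(σ)} (y−1)^{|σ| − r(σ)}`. -/
noncomputable def tutte {α : Type*} (Δ : Finset (Finset α)) (r : Finset α → ℕ)
    (x y : ℝ) : ℝ :=
  ∑ σ ∈ Δ, (x - 1) ^ (rkOf Δ r - r σ) * (y - 1) ^ (σ.card - r σ)

/-- `B` is a basis: an independent face maximal among independent faces. -/
def IsSMBasis {α : Type*} (Δ : Finset (Finset α)) (r : Finset α → ℕ) (B : Finset α) : Prop :=
  B ∈ Δ ∧ r B = B.card ∧ ∀ X ∈ Δ, r X = X.card → B ⊆ X → X = B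

/-!
Every face `σ` avoiding the coloop `e` extends to the face `σ ∪ {e}` of rank `r σ + 1`: an
independent subset `τ ⊆ σ` of full rank lies in a basis, which contains `e`, so `τ ∪ {e}` is
independent, and the union axiom glues it to `σ`. Hence the faces without `e` are exactly the
link, the faces with `e` are the link faces with `e` added, the contraction rank is `r` itself
on the link, and the total rank drops by one. A link face `τ` then contributes its term of
`T_{𝒞/e}` through `τ ∪ {e}` and `x - 1` times that term through `τ`, so `T_𝒞 = x · T_{𝒞/e}`.
-/

namespace IsSemimatroid

variable {α : Type*} [DecidableEq α] {Δ : Finset α → Prop} {r : Finset α → ℕ}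

theorem empty_mem (h : IsSemimatroid Δ r) : Δ ∅ :=
  let ⟨_, hσ⟩ := h.nonempty
  h.down_closed hσ (Finset.empty_subset _)

theorem rank_empty (h : IsSemimatroid Δ r) : r ∅ = 0 :=
  Nat.le_zero.mp (h.rank_le_card h.empty_mem)

theorem rank_insert_le (h : IsSemimatroid Δ r) {σ : Finset α} {x : α} (hx : Δ (insert x σ)) :
    r (insert x σ) ≤ r σ + 1 := by
  have hσ := h.down_closed hx (Finset.subset_insert x σ)
  have hx₁ : Δ {x} := h.down_closed hx (by simp)
  have hsub := h.submodular hσ hx₁ (by rwa [Finset.union_singleton])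
  have hr₁ : r {x} ≤ 1 := h.rank_le_card hx₁
  rw [Finset.union_singleton] at hsub
  omega

theorem rank_union_le (h : IsSemimatroid Δ r) (τ S : Finset α) (hτS : Δ (τ ∪ S)) :
    r (τ ∪ S) ≤ r τ + S.card := by
  induction S using Finset.induction_on with
  | empty => simp
  | insert y S hyS ih =>
    rw [Finset.union_insert] at hτS ⊢
    have := ih (h.down_closed hτS (Finset.subset_insert y _))
    have := h.rank_insert_le hτS
    rw [Finset.card_insert_of_notMem hyS]
    omega

theorem rank_eq_card_of_subset (h : IsSemimatroid Δ r) {A B : Finset α} (hB : Δ B)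
    (hAB : A ⊆ B) (hBind : r B = B.card) : r A = A.card := by
  have hle := h.rank_union_le A (B \ A) (by rwa [Finset.union_sdiff_of_subset hAB])
  rw [Finset.union_sdiff_of_subset hAB, Finset.card_sdiff_of_subset hAB] at hle
  have := h.rank_le_card (h.down_closed hB hAB)
  have := Finset.card_le_card hAB
  omega

theorem rank_union_eq_of_forall_rank_insert_eq (h : IsSemimatroid Δ r) (τ S : Finset α)
    (hτS : Δ (τ ∪ S)) (hS : ∀ y ∈ S, r (insert y τ) = r τ) : r (τ ∪ S) = r τ := by
  induction S using Finset.induction_on with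
  | empty => simp
  | insert y S _ ih =>
    have hU : Δ (τ ∪ S) := h.down_closed hτS (Finset.union_subset_union_right (by simp))
    have hy : Δ (insert y τ) := h.down_closed hτS (by grind)
    have hunion : τ ∪ S ∪ insert y τ = τ ∪ insert y S := by grind
    have hτ : Δ τ := h.down_closed hU Finset.subset_union_left
    have hsub := h.submodular hU hy (by rwa [hunion])
    rw [hunion, ih hU fun z hz => hS z (by simp [hz]), hS y (by simp)] at hsub
    have := h.rank_mono hτ (h.down_closed hU Finset.inter_subset_left)
      (Finset.subset_inter Finset.subset_union_left (Finset.subset_insert y τ))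
    have := h.rank_mono hτ hτS Finset.subset_union_left
    omega

theorem exists_rank_insert_eq_add_one (h : IsSemimatroid Δ r) {σ τ : Finset α} (hσ : Δ σ)
    (hτσ : τ ⊆ σ) (hlt : r τ < r σ) : ∃ y ∈ σ \ τ, r (insert y τ) = r τ + 1 := by
  by_contra! hne
  have hflat : ∀ y ∈ σ \ τ, r (insert y τ) = r τ := by
    intro y hy
    have hins : Δ (insert y τ) :=
      h.down_closed hσ (Finset.insert_subset (Finset.mem_sdiff.mp hy).1 hτσ)
    have := h.rank_insert_le hins
    have := h.rank_mono (h.down_closed hσ hτσ) hins (Finset.subset_insert y τ)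
    have := hne y hy
    omega
  have := h.rank_union_eq_of_forall_rank_insert_eq τ (σ \ τ)
    (by rwa [Finset.union_sdiff_of_subset hτσ]) hflat
  rw [Finset.union_sdiff_of_subset hτσ] at this
  omega

theorem exists_indep_subset_rank_eq (h : IsSemimatroid Δ r) {σ : Finset α} (hσ : Δ σ) :
    ∃ τ ⊆ σ, r τ = τ.card ∧ r τ = r σ := by
  obtain ⟨τ, hτF, hmax⟩ := (σ.powerset.filter fun τ => r τ = τ.card).exists_max_image
    Finset.card ⟨∅, by simp [h.rank_empty]⟩
  rw [Finset.mem_filter, Finset.mem_powerset] at hτF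
  obtain ⟨hτσ, hτ⟩ := hτF
  refine ⟨τ, hτσ, hτ, le_antisymm (h.rank_mono (h.down_closed hσ hτσ) hσ hτσ) ?_⟩
  by_contra! hlt
  obtain ⟨y, hy, hry⟩ := h.exists_rank_insert_eq_add_one hσ hτσ hlt
  rw [Finset.mem_sdiff] at hy
  have := hmax (insert y τ) (by
    simp [Finset.insert_subset hy.1 hτσ, hry, Finset.card_insert_of_notMem hy.2, hτ])
  rw [Finset.card_insert_of_notMem hy.2] at this
  omega

end IsSemimatroid

theorem tutte_congr {α : Type*} {Δ : Finset (Finset α)} {r r' : Finset α → ℕ}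
    (hrr' : ∀ σ ∈ Δ, r σ = r' σ) (x y : ℝ) : tutte Δ r x y = tutte Δ r' x y := by
  unfold tutte rkOf
  rw [Finset.sup_congr rfl hrr']
  exact Finset.sum_congr rfl fun σ hσ => by rw [hrr' σ hσ]

section

variable {α : Type*} [DecidableEq α] {Δ : Finset (Finset α)} {r : Finset α → ℕ}

theorem exists_isSMBasis_superset {τ : Finset α} (hτ : τ ∈ Δ) (hτind : r τ = τ.card) :
    ∃ B, IsSMBasis Δ r B ∧ τ ⊆ B := by
  obtain ⟨B, hBF, hmax⟩ := (Δ.filter fun X => τ ⊆ X ∧ r X = X.card).exists_max_image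
    Finset.card ⟨τ, by simp [hτ, hτind]⟩
  rw [Finset.mem_filter] at hBF
  obtain ⟨hB, hτB, hBind⟩ := hBF
  refine ⟨B, ⟨hB, hBind, fun X hX hXind hBX => ?_⟩, hτB⟩
  exact (Finset.eq_of_subset_of_card_le hBX
    (hmax X (Finset.mem_filter.mpr ⟨hX, hτB.trans hBX, hXind⟩))).symm

variable {e : α}

theorem mem_lkC {τ : Finset α} : τ ∈ lkC Δ e ↔ e ∉ τ ∧ insert e τ ∈ Δ := by
  simp only [lkC, Finset.mem_image, Finset.mem_filter]
  constructor
  · rintro ⟨σ, ⟨hσ, heσ⟩, rfl⟩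
    exact ⟨Finset.notMem_erase e σ, by rwa [Finset.insert_erase heσ]⟩
  · rintro ⟨heτ, hτ⟩
    exact ⟨insert e τ, ⟨hτ, Finset.mem_insert_self e τ⟩, Finset.erase_insert heτ⟩

theorem sum_eq_sum_lkC_add_sum_delC {M : Type*} [AddCommMonoid M] (f : Finset α → M) :
    ∑ σ ∈ Δ, f σ = ∑ τ ∈ lkC Δ e, f (insert e τ) + ∑ σ ∈ delC Δ e, f σ := by
  rw [← Finset.sum_filter_add_sum_filter_not Δ (e ∈ ·), delC, lkC, Finset.sum_image]
  · exact congrArg (· + _) (Finset.sum_congr rfl fun σ hσ => by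
      rw [Finset.insert_erase (Finset.mem_filter.mp hσ).2])
  · intro σ hσ σ' hσ' heq
    rw [← Finset.insert_erase (Finset.mem_filter.mp hσ).2,
      ← Finset.insert_erase (Finset.mem_filter.mp hσ').2]
    exact congrArg (insert e) heq

end

namespace IsSemimatroid

variable {α : Type*} [DecidableEq α] {Δ : Finset (Finset α)} {r : Finset α → ℕ} {e : α}

theorem insert_coloop_mem_and_rank (h : IsSemimatroid (· ∈ Δ) r)
    (hcoloop : ∀ B, IsSMBasis Δ r B → e ∈ B) {σ : Finset α} (hσ : σ ∈ Δ) (heσ : e ∉ σ) :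
    insert e σ ∈ Δ ∧ r (insert e σ) = r σ + 1 := by
  obtain ⟨τ, hτσ, hτind, hrτ⟩ := h.exists_indep_subset_rank_eq hσ
  obtain ⟨B, hB, hτB⟩ := exists_isSMBasis_superset (h.down_closed hσ hτσ) hτind
  have heτB : insert e τ ⊆ B := Finset.insert_subset (hcoloop B hB) hτB
  have heτ : insert e τ ∈ Δ := h.down_closed hB.1 heτB
  have hreτ : r (insert e τ) = τ.card + 1 := by
    rw [h.rank_eq_card_of_subset hB.1 heτB hB.2.1,
      Finset.card_insert_of_notMem fun he => heσ (hτσ he)]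
  have hmem : insert e σ ∈ Δ := by
    have := h.union_mem hσ heτ
      (by rw [Finset.inter_insert_of_notMem heσ, Finset.inter_eq_right.2 hτσ, hrτ])
    rwa [Finset.union_insert, Finset.union_eq_left.2 hτσ] at this
  refine ⟨hmem, le_antisymm (h.rank_insert_le hmem) ?_⟩
  calc r σ + 1 = r (insert e τ) := by omega
    _ ≤ r (insert e σ) := h.rank_mono heτ hmem (Finset.insert_subset_insert e hτσ)

theorem delC_eq_lkC_of_coloop (h : IsSemimatroid (· ∈ Δ) r)
    (hcoloop : ∀ B, IsSMBasis Δ r B → e ∈ B) : delC Δ e = lkC Δ e := by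
  ext τ
  rw [delC, Finset.mem_filter, mem_lkC]
  exact ⟨fun ⟨hτ, heτ⟩ => ⟨heτ, (h.insert_coloop_mem_and_rank hcoloop hτ heτ).1⟩,
    fun ⟨heτ, hτ⟩ => ⟨h.down_closed hτ (Finset.subset_insert e τ), heτ⟩⟩

theorem rank_insert_coloop_of_mem_lkC (h : IsSemimatroid (· ∈ Δ) r)
    (hcoloop : ∀ B, IsSMBasis Δ r B → e ∈ B) {τ : Finset α} (hτ : τ ∈ lkC Δ e) :
    r (insert e τ) = r τ + 1 :=
  (h.insert_coloop_mem_and_rank hcoloop (h.down_closed (mem_lkC.mp hτ).2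
    (Finset.subset_insert e τ)) (mem_lkC.mp hτ).1).2

theorem rank_singleton_coloop (h : IsSemimatroid (· ∈ Δ) r)
    (hcoloop : ∀ B, IsSMBasis Δ r B → e ∈ B) : r {e} = 1 := by
  rw [← Finset.insert_empty, (h.insert_coloop_mem_and_rank hcoloop h.empty_mem
    (Finset.notMem_empty e)).2, h.rank_empty]

theorem rkOf_eq_rkOf_lkC_add_one (h : IsSemimatroid (· ∈ Δ) r)
    (hcoloop : ∀ B, IsSMBasis Δ r B → e ∈ B) : rkOf Δ r = rkOf (lkC Δ e) r + 1 := by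
  have hdel := h.delC_eq_lkC_of_coloop hcoloop
  apply le_antisymm
  · refine Finset.sup_le fun σ hσ => ?_
    by_cases heσ : e ∈ σ
    · have hL : σ.erase e ∈ lkC Δ e :=
        mem_lkC.mpr ⟨Finset.notMem_erase e σ, by rwa [Finset.insert_erase heσ]⟩
      have hr := h.rank_insert_coloop_of_mem_lkC hcoloop hL
      rw [Finset.insert_erase heσ] at hr
      rw [hr]
      exact Nat.add_le_add_right (Finset.le_sup hL) 1
    · have hL : σ ∈ lkC Δ e := hdel ▸ Finset.mem_filter.mpr ⟨hσ, heσ⟩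
      exact (Finset.le_sup (f := r) hL).trans (Nat.le_succ _)
  · have hne : (lkC Δ e).Nonempty :=
      ⟨∅, hdel ▸ Finset.mem_filter.mpr ⟨h.empty_mem, Finset.notMem_empty e⟩⟩
    obtain ⟨τ, hτ, hτsup⟩ := Finset.exists_mem_eq_sup (lkC Δ e) hne r
    rw [rkOf, hτsup, ← h.rank_insert_coloop_of_mem_lkC hcoloop hτ]
    exact Finset.le_sup (mem_lkC.mp hτ).2

end IsSemimatroid

theorem tutte_coloop_general {α : Type*} [DecidableEq α]
    (Δ : Finset (Finset α)) (r : Finset α → ℕ)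
    (h : IsSemimatroid (· ∈ Δ) r)
    (e : α)
    (hcoloop : ∀ B, IsSMBasis Δ r B → e ∈ B) :
    ∀ x y : ℝ,
      tutte Δ r x y = x * tutte (lkC Δ e) (fun σ => r (insert e σ) - r {e}) x y := by
  intro x y
  have hcontract : ∀ τ ∈ lkC Δ e, r τ = r (insert e τ) - r {e} := fun τ hτ => by
    rw [h.rank_insert_coloop_of_mem_lkC hcoloop hτ, h.rank_singleton_coloop hcoloop,
      Nat.add_sub_cancel]
  rw [← tutte_congr hcontract, tutte, tutte, sum_eq_sum_lkC_add_sum_delC (e := e),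
    h.delC_eq_lkC_of_coloop hcoloop, ← Finset.sum_add_distrib, Finset.mul_sum,
    h.rkOf_eq_rkOf_lkC_add_one hcoloop]
  refine Finset.sum_congr rfl fun τ hτ => ?_
  have hrτ : r τ ≤ rkOf (lkC Δ e) r := Finset.le_sup hτ
  rw [h.rank_insert_coloop_of_mem_lkC hcoloop hτ,
    Finset.card_insert_of_notMem (mem_lkC.mp hτ).1, Nat.add_sub_add_right,
    Nat.add_sub_add_right, Nat.sub_add_comm hrτ, pow_succ]
  ring

/-- if `e` is a coloop of a semimatroid (an element of every basis, with
`{e} ∈ Δ`), then `T_𝒞(x,y) = x · T_{𝒞/e}(x,y)`, where the contraction `𝒞/e` has face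
set `lk_e(Δ)` and rank `r'(σ) = r(σ∪{e}) − r({e})`. -/
theorem tutte_coloop {α : Type*} [DecidableEq α]
    (Δ : Finset (Finset α)) (r : Finset α → ℕ)
    (h : IsSemimatroid (· ∈ Δ) r)
    (e : α) (he : ({e} : Finset α) ∈ Δ)
    (hcoloop : ∀ B, IsSMBasis Δ r B → e ∈ B) :
    ∀ x y : ℝ,
      tutte Δ r x y = x * tutte (lkC Δ e) (fun σ => r (insert e σ) - r {e}) x y :=
  tutte_coloop_general Δ r h e hcoloop
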